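/- arXiv:2401.17687 — 3 statements merged into one kernel-verified Lean document; each statement's English description precedes it below -/
import Mathlib

section
/- For n ≥ 1, [n]_q! · h_n = ∑_k q^{k_1+k_2+...+k_r} ([n-1]_q!/([k_1]_q [k_2]_q ⋯ [k_{r-1}]_q · [k_r]_q!)) · [p_{n-k_1}][p_{k_1-k_2}]⋯[p_{k_{r-1}-k_r}], where the sum extends over all sequences k = (k_1,...,k_r) with r ≥ 1 and n-1 ≥ k_1 > k_2 > ... > k_{r-1} > k_r = 0. -/
/-!
Comparing coefficients of `t^{n-1}` in `D_q H(t) = H(qt) P(t)` gives the recurrence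
`[n]_q h_n = p_n + ∑_{m=1}^{n-1} q^m h_m p_{n-m}`. Splitting off the largest element `k_1 = m`
of a chain shows that the right-hand side divided by `[n-1]_q!` obeys the same recurrence with
`[m]_q h_m` in place of `h_m`, so the two agree by strong induction on `n`.
-/

/-- The q-integer `[n]_q = 1 + q + ... + q^{n-1}`. -/
noncomputable def qInt {K : Type*} [CommRing K] (q : K) (n : ℕ) : K :=
  ∑ i ∈ Finset.range n, q ^ i

/-- The q-factorial `[n]_q!`. -/
noncomputable def qFact {K : Type*} [CommRing K] (q : K) (n : ℕ) : K :=
  ∏ i ∈ Finset.range n, qInt q (i + 1)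

/-- The q-derivative `D_q F(t) = (F(qt) - F(t))/((q-1)t)`. -/
noncomputable def qDeriv {K : Type*} [CommRing K] (q : K) (F : PowerSeries K) :
    PowerSeries K :=
  PowerSeries.mk fun n => qInt q (n + 1) * PowerSeries.coeff (n + 1) F

/-- The product `[p_{n-k_1}][p_{k_1-k_2}]⋯[p_{k_{r-1}-k_r}]` over the gaps of the chain
`0 = k_r < k_{r-1} < ... < k_1 < n`, encoded by `T = {k_1,...,k_{r-1}}`. -/
noncomputable def gapProd {K : Type*} [CommRing K] (p : ℕ → K) (n : ℕ) (T : Finset ℕ) : K :=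
  (((0 :: T.sort (· ≤ ·)) ++ [n]).zip (((0 :: T.sort (· ≤ ·)) ++ [n]).tail) |>.map
    (fun ab => p (ab.2 - ab.1))).prod

theorem List.zip_tail_append_pair {α : Type*} (l : List α) (a b : α) :
    (l ++ [a, b]).zip (l ++ [a, b]).tail = (l ++ [a]).zip (l ++ [a]).tail ++ [(a, b)] := by
  induction l with
  | nil => rfl
  | cons x l ih =>
    cases l with
    | nil => rfl
    | cons y l => simpa using ih

theorem Finset.sort_insert_of_forall_lt {α : Type*} [LinearOrder α] (s : Finset α) {m : α}
    (hs : ∀ x ∈ s, x < m) : (insert m s).sort (· ≤ ·) = s.sort (· ≤ ·) ++ [m] := by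
  refine (Finset.sortedLT_sort _).pairwise.eq_of_mem_iff ?_ fun a => ?_
  · simpa [List.pairwise_append] using ⟨(Finset.sortedLT_sort s).pairwise, hs⟩
  · simp [or_comm]

theorem Finset.sum_powerset_Icc_one_split_max {M : Type*} [AddCommMonoid M]
    (f : Finset ℕ → M) (n : ℕ) :
    ∑ T ∈ (Icc 1 n).powerset, f T =
      f ∅ + ∑ m ∈ Icc 1 n, ∑ T ∈ (Icc 1 (m - 1)).powerset, f (insert m T) := by
  induction n with
  | zero => simp
  | succ n ih =>
    rw [← insert_Icc_right_eq_Icc_add_one (by omega), sum_powerset_insert (by simp), ih,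
      insert_Icc_right_eq_Icc_add_one (by omega), sum_Icc_succ_top (by omega), add_assoc]
    simp

open Finset PowerSeries

section CommRing

variable {K : Type*} [CommRing K]

theorem gapProd_empty (p : ℕ → K) (n : ℕ) : gapProd p n ∅ = p n := by
  simp [gapProd]

theorem gapProd_insert_of_forall_lt (p : ℕ → K) (n : ℕ) {m : ℕ} {T : Finset ℕ}
    (hT : ∀ x ∈ T, x < m) : gapProd p n (insert m T) = gapProd p m T * p (n - m) := by
  have := List.zip_tail_append_pair (0 :: T.sort (· ≤ ·)) m n
  simp_all [gapProd, sort_insert_of_forall_lt T hT]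

theorem qFact_succ (q : K) (n : ℕ) : qFact q (n + 1) = qFact q n * qInt q (n + 1) :=
  prod_range_succ _ _

end CommRing

section Field

variable {K : Type*} [Field K]

/-- The right-hand side of the theorem divided by `[n-1]_q!`. -/
noncomputable def chainSum (q : K) (p : ℕ → K) (n : ℕ) : K :=
  ∑ T ∈ (Icc 1 (n - 1)).powerset, q ^ (∑ j ∈ T, j) / (∏ j ∈ T, qInt q j) * gapProd p n T

theorem chainSum_eq (q : K) (p : ℕ → K) (n : ℕ) :
    chainSum q p n =
      p n + ∑ m ∈ Icc 1 (n - 1), q ^ m / qInt q m * chainSum q p m * p (n - m) := by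
  rw [chainSum, sum_powerset_Icc_one_split_max]
  simp only [sum_empty, pow_zero, prod_empty, div_one, one_mul, gapProd_empty, chainSum,
    mul_sum, sum_mul]
  congr 1
  refine sum_congr rfl fun m _ => sum_congr rfl fun T hT => ?_
  have hT_lt : ∀ x ∈ T, x < m := fun x hx => by
    have := mem_Icc.mp (mem_powerset.mp hT hx)
    omega
  have hmT : m ∉ T := fun hm => (hT_lt m hm).false
  rw [sum_insert hmT, prod_insert hmT, gapProd_insert_of_forall_lt p n hT_lt, pow_add]
  ring

theorem qInt_mul_eq_add_sum_of_qDeriv {q : K} {h p : ℕ → K} (hh0 : h 0 = 1)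
    (hdefp : qDeriv q (mk h) = rescale q (mk h) * mk (fun n => p (n + 1))) {n : ℕ}
    (hn : 1 ≤ n) :
    qInt q n * h n = p n + ∑ m ∈ Icc 1 (n - 1), q ^ m * h m * p (n - m) := by
  obtain ⟨n, rfl⟩ : ∃ k, n = k + 1 := ⟨n - 1, by omega⟩
  have := congrArg (coeff n) hdefp
  rw [qDeriv, coeff_mk, coeff_mk, coeff_mul, Nat.sum_antidiagonal_eq_sum_range_succ_mk,
    sum_range_succ'] at this
  rw [this, add_comm, Nat.add_sub_cancel, ← Ico_add_one_right_eq_Icc,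
    ← sum_Ico_add' (fun m => q ^ m * h m * p (n + 1 - m)) 0 n 1, ← range_eq_Ico]
  simp only [coeff_rescale, coeff_mk, pow_zero, hh0, one_mul, Nat.sub_zero]
  congr 1
  refine sum_congr rfl fun m hm => ?_
  rw [show n - (m + 1) + 1 = n + 1 - (m + 1) by have := mem_range.mp hm; omega]

theorem qInt_mul_eq_chainSum {q : K} (hq : ∀ m : ℕ, 1 ≤ m → qInt q m ≠ 0)
    {h p : ℕ → K}
    (hrec : ∀ n, 1 ≤ n →
      qInt q n * h n = p n + ∑ m ∈ Icc 1 (n - 1), q ^ m * h m * p (n - m))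
    (n : ℕ) (hn : 1 ≤ n) : qInt q n * h n = chainSum q p n := by
  induction n using Nat.strong_induction_on with
  | _ n ih =>
    rw [hrec n hn, chainSum_eq]
    congr 1
    refine sum_congr rfl fun m hm => ?_
    obtain ⟨hm1, hmn⟩ := mem_Icc.mp hm
    rw [← ih m (by omega) hm1]
    field_simp [hq m hm1]

end Field

/-- Lemma 4.4: for `n ≥ 1`,
`[n]! hₙ = ∑_k q^{k_1+⋯+k_r} [n-1]!/([k_1]⋯[k_{r-1}]·[k_r]!) [p_{n-k_1}]⋯[p_{k_{r-1}-k_r}]`,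
the sum over all sequences `n-1 ≥ k_1 > ... > k_{r-1} > k_r = 0`, encoded by
`T = {k_1,...,k_{r-1}} ⊆ {1,...,n-1}` (with `[k_r]! = [0]! = 1`). -/
theorem stmt7 {K : Type*} [Field K] (q : K)
    (hq : ∀ m : ℕ, 1 ≤ m → qInt q m ≠ 0)
    (h p : ℕ → K) (hh0 : h 0 = 1)
    (hdefp : qDeriv q (PowerSeries.mk h) =
      PowerSeries.rescale q (PowerSeries.mk h) * PowerSeries.mk (fun n => p (n + 1))) :
    ∀ n : ℕ, 1 ≤ n →
      qFact q n * h n =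
        ∑ T ∈ (Finset.Icc 1 (n - 1)).powerset,
          q ^ (∑ j ∈ T, j) *
            (qFact q (n - 1) / ∏ j ∈ T, qInt q j) * gapProd p n T := by
  intro n hn
  obtain ⟨k, rfl⟩ : ∃ k, n = k + 1 := ⟨n - 1, by omega⟩
  rw [qFact_succ, mul_assoc,
    qInt_mul_eq_chainSum hq (fun _ => qInt_mul_eq_add_sum_of_qDeriv hh0 hdefp) _ hn, chainSum,
    mul_sum, Nat.add_sub_cancel]
  exact sum_congr rfl fun T _ => by ring
end

section
/- For n ≥ 1, h_n = ∑_{|λ|=n} (q^{|λ|-ℓ(λ)} [z_λ]_{q^{-1}})^{-1} [p_λ]_q, where ([z_λ]_{q^{-1}})^{-1} = ∑_u ([n]_{q^{-1}} [n-u_1]_{q^{-1}} ⋯ [u_r]_{q^{-1}})^{-1}, the sum over all distinct permutations u of the parts of λ. -/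
/-!
Comparing coefficients of `t^m` in `D_q H(t) = H(qt) · ∑ [p_{n+1}] t^n` gives the recurrence
`[m+1]_q h_{m+1} = ∑_{i+j=m} q^i h_i [p_{j+1}]`. Unrolling it writes `h_n` as a sum over the
compositions `(a, u)` of `n`, each weighted by `q^{sum u} [p_a] / [n]_q` times the weight of `u`.
Since `q^m [m+1]_{q⁻¹} = [m+1]_q`, this weight is the summand of the statement, and grouping the
compositions by their underlying partition gives the theorem.
-/

open Finset

theorem Multiset.mem_permutations_toList_toFinset {α : Type*} [DecidableEq α] {s : Multiset α}
    {u : List α} : u ∈ s.toList.permutations.toFinset ↔ (u : Multiset α) = s := by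
  rw [List.mem_toFinset, List.mem_permutations, ← Multiset.coe_eq_coe, Multiset.coe_toList]

def compositionBlocks (n : ℕ) : Finset (List ℕ) :=
  (univ : Finset (Composition n)).map ⟨Composition.blocks, fun _ _ => Composition.ext⟩

theorem mem_compositionBlocks {n : ℕ} {l : List ℕ} :
    l ∈ compositionBlocks n ↔ (∀ i ∈ l, 0 < i) ∧ l.sum = n := by
  simp only [compositionBlocks, mem_map, mem_univ, true_and]
  exact ⟨by rintro ⟨c, rfl⟩; exact ⟨fun _ => c.blocks_pos, c.blocks_sum⟩,
    fun ⟨hpos, hsum⟩ => ⟨⟨l, hpos _, hsum⟩, rfl⟩⟩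

theorem compositionBlocks_zero : compositionBlocks 0 = {[]} := by
  ext l
  rw [mem_compositionBlocks, mem_singleton]
  constructor
  · rintro ⟨hpos, hsum⟩
    exact List.eq_nil_iff_forall_not_mem.mpr fun i hi =>
      (hpos i hi).ne' (List.sum_eq_zero_iff.mp hsum i hi)
  · rintro rfl
    simp

theorem sum_compositionBlocks_succ {M : Type*} [AddCommMonoid M] (f : List ℕ → M) (m : ℕ) :
    ∑ l ∈ compositionBlocks (m + 1), f l =
      ∑ x ∈ antidiagonal m, ∑ l ∈ compositionBlocks x.1, f ((x.2 + 1) :: l) := by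
  rw [sum_sigma']
  symm
  refine sum_nbij' (fun x => (x.1.2 + 1) :: x.2) (fun l => ⟨(l.tail.sum, l.headI - 1), l.tail⟩)
    ?_ ?_ ?_ ?_ (fun _ _ => rfl)
  · rintro ⟨⟨i, j⟩, l⟩ hx
    simp only [mem_sigma, HasAntidiagonal.mem_antidiagonal, mem_compositionBlocks] at hx ⊢
    obtain ⟨hij, hpos, hsum⟩ := hx
    refine ⟨?_, by simp only [List.sum_cons]; omega⟩
    simpa using hpos
  · rintro (_ | ⟨a, l⟩) hl <;>
      simp only [mem_compositionBlocks, List.sum_nil, List.sum_cons] at hl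
    · omega
    · have ha : 0 < a := hl.1 a List.mem_cons_self
      simp only [mem_sigma, HasAntidiagonal.mem_antidiagonal, mem_compositionBlocks,
        List.tail_cons, List.headI_cons]
      exact ⟨by omega, fun i hi => hl.1 i (by simp [hi]), trivial⟩
  · rintro ⟨⟨i, j⟩, l⟩ hx
    simp only [mem_sigma, mem_compositionBlocks] at hx
    simp [hx.2.2]
  · rintro (_ | ⟨a, l⟩) hl <;>
      simp only [mem_compositionBlocks, List.sum_nil, List.sum_cons] at hl
    · omega
    · have ha : 0 < a := hl.1 a List.mem_cons_self
      simp only [List.headI_cons, List.tail_cons]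
      congr 1
      omega

theorem sum_partition_sum_permutations {M : Type*} [AddCommMonoid M] (f : List ℕ → M) (n : ℕ) :
    ∑ μ : Nat.Partition n, ∑ u ∈ μ.parts.toList.permutations.toFinset, f u =
      ∑ l ∈ compositionBlocks n, f l := by
  rw [← sum_biUnion]
  · congr 1
    ext l
    simp only [mem_biUnion, mem_univ, true_and, Multiset.mem_permutations_toList_toFinset,
      mem_compositionBlocks]
    constructor
    · rintro ⟨μ, hμ⟩
      refine ⟨fun i hi => μ.parts_pos (hμ ▸ Multiset.mem_coe.mpr hi), ?_⟩
      rw [← Multiset.sum_coe, hμ, μ.parts_sum]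
    · rintro ⟨hpos, hsum⟩
      exact ⟨Nat.Partition.ofComposition n ⟨l, hpos _, hsum⟩, rfl⟩
  · intro μ _ ν _ hne
    refine disjoint_left.mpr fun u hμ hν => hne (Nat.Partition.ext ?_)
    rw [Multiset.mem_permutations_toList_toFinset] at hμ hν
    rw [← hμ, hν]

section

variable {K : Type*} [Field K]

theorem pow_mul_qInt_inv {q : K} (hq0 : q ≠ 0) (m : ℕ) :
    q ^ m * qInt q⁻¹ (m + 1) = qInt q (m + 1) := by
  rw [qInt, mul_sum, qInt, ← sum_range_reflect]
  refine sum_congr rfl fun i hi => ?_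
  rw [mem_range] at hi
  rw [inv_pow, Nat.add_sub_cancel, pow_sub₀ q hq0 (by omega), mul_inv, inv_inv,
    mul_inv_cancel_left₀ (pow_ne_zero _ hq0)]

theorem qInt_mul_coeff_succ {q : K} {h p : ℕ → K}
    (hdefp : qDeriv q (PowerSeries.mk h) =
      PowerSeries.rescale q (PowerSeries.mk h) * PowerSeries.mk (fun n => p (n + 1)))
    (m : ℕ) :
    qInt q (m + 1) * h (m + 1) = ∑ x ∈ antidiagonal m, q ^ x.1 * h x.1 * p (x.2 + 1) := by
  simpa [qDeriv, PowerSeries.coeff_mul] using congrArg (PowerSeries.coeff m) hdefp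

noncomputable def compositionWeight (q : K) (p : ℕ → K) : List ℕ → K
  | [] => 1
  | a :: l => q ^ l.sum * p a * compositionWeight q p l / qInt q (a + l.sum)

theorem eq_sum_compositionWeight {q : K} (hq : ∀ m : ℕ, 1 ≤ m → qInt q m ≠ 0) {h p : ℕ → K}
    (hh0 : h 0 = 1)
    (hrec : ∀ m, qInt q (m + 1) * h (m + 1) =
      ∑ x ∈ antidiagonal m, q ^ x.1 * h x.1 * p (x.2 + 1))
    (n : ℕ) : h n = ∑ l ∈ compositionBlocks n, compositionWeight q p l := by
  induction n using Nat.strong_induction_on with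
  | _ n ih =>
  rcases n with _ | m
  · simp [compositionBlocks_zero, compositionWeight, hh0]
  calc h (m + 1) = (∑ x ∈ antidiagonal m, q ^ x.1 * h x.1 * p (x.2 + 1)) / qInt q (m + 1) := by
        rw [← hrec, mul_div_cancel_left₀ _ (hq _ m.succ_pos)]
    _ = ∑ l ∈ compositionBlocks (m + 1), compositionWeight q p l := by
        rw [sum_compositionBlocks_succ, sum_div]
        refine sum_congr rfl fun x hx => ?_
        rw [HasAntidiagonal.mem_antidiagonal] at hx
        rw [ih x.1 (by omega), mul_sum, sum_mul, sum_div]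
        refine sum_congr rfl fun l hl => ?_
        rw [compositionWeight, (mem_compositionBlocks.mp hl).2,
          show x.2 + 1 + x.1 = m + 1 by omega]
        ring

theorem compositionWeight_eq {q : K} (hq0 : q ≠ 0) (p : ℕ → K) {n : ℕ} {l : List ℕ}
    (hpos : ∀ i ∈ l, 0 < i) (hsum : l.sum = n) :
    compositionWeight q p l = (q ^ (n - l.length))⁻¹ *
      (∏ i ∈ range l.length, qInt q⁻¹ (n - (l.take i).sum))⁻¹ * (l.map p).prod := by
  subst hsum
  induction l with
  | nil => simp [compositionWeight]
  | cons a l ih =>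
    have hlen : l.length ≤ l.sum :=
      List.length_le_sum_of_one_le _ fun i hi => hpos i (List.mem_cons_of_mem a hi)
    obtain ⟨b, rfl⟩ : ∃ b, a = b + 1 := Nat.exists_eq_add_one.mpr (hpos a List.mem_cons_self)
    have hprod :
        ∏ i ∈ range (l.length + 1), qInt q⁻¹ (b + 1 + l.sum - (((b + 1) :: l).take i).sum) =
          (∏ i ∈ range l.length, qInt q⁻¹ (l.sum - (l.take i).sum)) * qInt q⁻¹ (b + 1 + l.sum) := by
      simp [prod_range_succ', Nat.add_sub_add_left]
    have hinv : qInt q⁻¹ (b + 1 + l.sum) = (q ^ (b + l.sum))⁻¹ * qInt q (b + 1 + l.sum) := by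
      rw [eq_inv_mul_iff_mul_eq₀ (pow_ne_zero _ hq0), add_right_comm, pow_mul_qInt_inv hq0]
    rw [compositionWeight, ih fun i hi => hpos i (List.mem_cons_of_mem _ hi)]
    simp only [List.length_cons, List.sum_cons, List.map_cons, List.prod_cons, hprod, hinv,
      show b + 1 + l.sum - (l.length + 1) = b + (l.sum - l.length) by omega, pow_add]
    field_simp

theorem partition_term_eq_sum_compositionWeight {q : K} (hq0 : q ≠ 0) (p : ℕ → K) {n : ℕ}
    (μ : Nat.Partition n) :
    (q ^ (n - Multiset.card μ.parts))⁻¹ *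
        (∑ u ∈ μ.parts.toList.permutations.toFinset,
          (∏ i ∈ range u.length, qInt q⁻¹ (n - (u.take i).sum))⁻¹) * (μ.parts.map p).prod =
      ∑ u ∈ μ.parts.toList.permutations.toFinset, compositionWeight q p u := by
  rw [mul_sum, sum_mul]
  refine sum_congr rfl fun u hu => ?_
  have hμ : (u : Multiset ℕ) = μ.parts := Multiset.mem_permutations_toList_toFinset.mp hu
  rw [compositionWeight_eq hq0 p (fun i hi => μ.parts_pos (hμ ▸ Multiset.mem_coe.mpr hi))
    (by rw [← Multiset.sum_coe, hμ, μ.parts_sum]), ← hμ, Multiset.coe_card, Multiset.map_coe,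
    Multiset.prod_coe]

end

/-- Theorem 4.5: for `n ≥ 1`, `hₙ = ∑_{|λ|=n} (q^{|λ|-ℓ(λ)}[z_λ]_{q⁻¹})⁻¹ [p_λ]`, where
`([z_λ]_{q⁻¹})⁻¹ = ∑_u ([n]_{q⁻¹}[n-u₁]_{q⁻¹}⋯[u_r]_{q⁻¹})⁻¹`, the inner sum over
all distinct permutations `u` of the parts of `λ`, and `[pₙ]` is defined by
`∑_{n≥1}[pₙ]t^{n-1} = D_q H(t)/H(qt)`. -/
theorem stmt8 {K : Type*} [Field K] (q : K) (hq0 : q ≠ 0)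
    (hq : ∀ m : ℕ, 1 ≤ m → qInt q m ≠ 0)
    (h p : ℕ → K) (hh0 : h 0 = 1)
    (hdefp : qDeriv q (PowerSeries.mk h) =
      PowerSeries.rescale q (PowerSeries.mk h) * PowerSeries.mk (fun n => p (n + 1))) :
    ∀ n : ℕ, 1 ≤ n →
      h n = ∑ μ : Nat.Partition n,
        (q ^ (n - Multiset.card μ.parts))⁻¹ *
          (∑ u ∈ μ.parts.toList.permutations.toFinset,
            (∏ i ∈ Finset.range u.length, qInt q⁻¹ (n - (u.take i).sum))⁻¹) *
          (μ.parts.map p).prod := by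
  intro n _
  rw [eq_sum_compositionWeight hq hh0 (qInt_mul_coeff_succ hdefp) n,
    ← sum_partition_sum_permutations]
  exact sum_congr rfl fun μ _ => (partition_term_eq_sum_compositionWeight hq0 p μ).symm
end

section
/- For formal power series F (with F(0)=0) and G, the starred q-composition satisfies D_q(G[F]*_q)(t) = ((D_q G)[q^{-1}F]*_q)(qt) · D_q F(t). -/
open PowerSeries Finset

section CommRing

variable {K : Type*} [CommRing K] (q : K)

@[simp]
theorem coeff_qDeriv (φ : PowerSeries K) (n : ℕ) :
    coeff n (qDeriv q φ) = qInt q (n + 1) * coeff (n + 1) φ :=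
  coeff_mk n _

@[simp]
theorem qDeriv_one : qDeriv q (1 : PowerSeries K) = 0 := by
  ext n
  simp [coeff_one]

theorem qDeriv_C_mul (c : K) (φ : PowerSeries K) : qDeriv q (C c * φ) = C c * qDeriv q φ := by
  ext n
  simp only [coeff_qDeriv, coeff_C_mul]
  ring

theorem qDeriv_sum {ι : Type*} (s : Finset ι) (φ : ι → PowerSeries K) :
    qDeriv q (∑ i ∈ s, φ i) = ∑ i ∈ s, qDeriv q (φ i) := by
  ext n
  simp [map_sum, mul_sum]

theorem rescale_C (c : K) : rescale q (C c) = C c := by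
  ext (_ | n) <;> simp [coeff_C]

theorem X_pow_dvd_rescale {n : ℕ} {φ : PowerSeries K} (h : X ^ n ∣ φ) : X ^ n ∣ rescale q φ := by
  rw [X_pow_dvd_iff] at h ⊢
  intro m hm
  rw [coeff_rescale, h m hm, mul_zero]

theorem coeff_mul_congr_left {n : ℕ} {φ ψ : PowerSeries K}
    (h : ∀ m ≤ n, coeff m φ = coeff m ψ) (χ : PowerSeries K) :
    coeff n (φ * χ) = coeff n (ψ * χ) := by
  simp only [coeff_mul]
  exact sum_congr rfl fun p hp => by rw [h p.1 (HasAntidiagonal.antidiagonal.fst_le hp)]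

theorem coeff_eq_coeff_sum_range_of_X_pow_dvd {P : ℕ → PowerSeries K} (hP : ∀ k, X ^ k ∣ P k)
    {a : ℕ → K} {S : PowerSeries K}
    (hS : ∀ n, coeff n S = ∑ k ∈ range (n + 1), a k * coeff n (P k)) {m N : ℕ} (hm : m < N) :
    coeff m S = coeff m (∑ k ∈ range N, C (a k) * P k) := by
  simp only [hS, map_sum, coeff_C_mul]
  refine sum_subset (range_subset_range.mpr hm) fun k _ hk => ?_
  rw [X_pow_dvd_iff.mp (hP k) m (by simpa using hk), mul_zero]

variable {q} [IsDomain K] (hq : ∀ n, qInt q (n + 1) ≠ 0)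
include hq

theorem eq_of_qDeriv_eq {φ ψ : PowerSeries K} (hD : qDeriv q φ = qDeriv q ψ)
    (h0 : constantCoeff φ = constantCoeff ψ) : φ = ψ := by
  ext (_ | n)
  · simpa using h0
  · exact mul_left_cancel₀ (hq n) (by simpa using congrArg (coeff n) hD)

theorem X_pow_succ_dvd_of_qDeriv {φ : PowerSeries K} {n : ℕ} (h0 : constantCoeff φ = 0)
    (hD : X ^ n ∣ qDeriv q φ) : X ^ (n + 1) ∣ φ := by
  rw [X_pow_dvd_iff] at hD ⊢
  rintro (_ | m) hm
  · simpa using h0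
  · simpa [hq m] using hD m (by omega)

end CommRing

section Field

variable {K : Type*} [Field K]

structure IsStarredQPowers (q : K) (F : PowerSeries K) (P : ℕ → PowerSeries K) : Prop where
  zero : P 0 = 1
  constantCoeff_eq_zero : ∀ k, 0 < k → constantCoeff (P k) = 0
  qDeriv_eq : ∀ k, 0 < k → qDeriv q (P k) =
    C (qInt q k * (q ^ (k - 1))⁻¹) * rescale q (P (k - 1)) * qDeriv q F

namespace IsStarredQPowers

variable {q : K} {F : PowerSeries K} {P : ℕ → PowerSeries K} (hP : IsStarredQPowers q F P)
include hP

theorem qDeriv_succ (k : ℕ) :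
    qDeriv q (P (k + 1)) = C (qInt q (k + 1) * (q ^ k)⁻¹) * rescale q (P k) * qDeriv q F :=
  hP.qDeriv_eq (k + 1) k.succ_pos

variable (hq : ∀ n, qInt q (n + 1) ≠ 0)
include hq

theorem X_pow_dvd (k : ℕ) : X ^ k ∣ P k := by
  induction k with
  | zero => simp
  | succ k ih =>
    refine X_pow_succ_dvd_of_qDeriv hq (hP.constantCoeff_eq_zero _ k.succ_pos) ?_
    rw [hP.qDeriv_succ, mul_assoc]
    exact ((X_pow_dvd_rescale q ih).mul_right _).mul_left _

theorem eq_C_pow_mul {c : K} {P' : ℕ → PowerSeries K} (hP' : IsStarredQPowers q (C c * F) P')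
    (k : ℕ) : P' k = C (c ^ k) * P k := by
  induction k with
  | zero => simp [hP.zero, hP'.zero]
  | succ k ih =>
    refine eq_of_qDeriv_eq hq ?_ ?_
    · rw [hP'.qDeriv_succ, ih, qDeriv_C_mul, qDeriv_C_mul, hP.qDeriv_succ]
      simp only [map_mul, map_pow, rescale_C]
      ring
    · simp [hP.constantCoeff_eq_zero, hP'.constantCoeff_eq_zero]

theorem qDeriv_sum_range_succ {P' : ℕ → PowerSeries K}
    (hP' : IsStarredQPowers q (C q⁻¹ * F) P') (g : ℕ → K) (N : ℕ) :
    qDeriv q (∑ k ∈ range (N + 1), C (g k / qFact q k) * P k) =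
      rescale q (∑ k ∈ range N, C (g (k + 1) / qFact q k) * P' k) * qDeriv q F := by
  rw [qDeriv_sum, sum_range_succ', map_sum, sum_mul]
  simp only [qDeriv_C_mul, hP.zero, qDeriv_one, mul_zero, add_zero]
  refine sum_congr rfl fun k _ => ?_
  have hcoeff : g (k + 1) / qFact q (k + 1) * (qInt q (k + 1) * (q ^ k)⁻¹) =
      g (k + 1) / qFact q k * (q ^ k)⁻¹ := by
    rw [qFact, prod_range_succ, ← qFact]
    field_simp [hq k]
  replace hcoeff := congrArg C hcoeff
  rw [hP.qDeriv_succ, hP.eq_C_pow_mul hq hP', inv_pow]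
  simp only [map_mul, rescale_C] at hcoeff ⊢
  linear_combination (rescale q (P k) * qDeriv q F) * hcoeff

end IsStarredQPowers

end Field

theorem stmt15_general {K : Type*} [Field K] (q : K)
    (hq : ∀ m : ℕ, 1 ≤ m → qInt q m ≠ 0)
    (F : PowerSeries K)
    (Fk : ℕ → PowerSeries K) (hFk0 : Fk 0 = 1)
    (hFkc : ∀ k, 0 < k → PowerSeries.constantCoeff (Fk k) = 0)
    (hFkrec : ∀ k, 0 < k → qDeriv q (Fk k) =
      PowerSeries.C (qInt q k * (q ^ (k - 1))⁻¹) *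
        PowerSeries.rescale q (Fk (k - 1)) * qDeriv q F)
    (Fk' : ℕ → PowerSeries K) (hFk'0 : Fk' 0 = 1)
    (hFk'c : ∀ k, 0 < k → PowerSeries.constantCoeff (Fk' k) = 0)
    (hFk'rec : ∀ k, 0 < k → qDeriv q (Fk' k) =
      PowerSeries.C (qInt q k * (q ^ (k - 1))⁻¹) *
        PowerSeries.rescale q (Fk' (k - 1)) *
          qDeriv q (PowerSeries.C q⁻¹ * F))
    (g : ℕ → K) (Cs Ds : PowerSeries K)
    (hC : ∀ n, PowerSeries.coeff n Cs =
      ∑ k ∈ Finset.range (n + 1), g k / qFact q k * PowerSeries.coeff n (Fk k))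
    (hD : ∀ n, PowerSeries.coeff n Ds =
      ∑ k ∈ Finset.range (n + 1), g (k + 1) / qFact q k * PowerSeries.coeff n (Fk' k)) :
    qDeriv q Cs = PowerSeries.rescale q Ds * qDeriv q F := by
  have hq' : ∀ n, qInt q (n + 1) ≠ 0 := fun n => hq (n + 1) n.succ_pos
  have hP : IsStarredQPowers q F Fk := ⟨hFk0, hFkc, hFkrec⟩
  have hP' : IsStarredQPowers q (C q⁻¹ * F) Fk' := ⟨hFk'0, hFk'c, hFk'rec⟩
  ext1 n
  have hCs : coeff n (qDeriv q Cs) =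
      coeff n (qDeriv q (∑ k ∈ range (n + 2), C (g k / qFact q k) * Fk k)) := by
    rw [coeff_qDeriv, coeff_qDeriv,
      coeff_eq_coeff_sum_range_of_X_pow_dvd (hP.X_pow_dvd hq') hC (n + 1).lt_succ_self]
  have hDs : coeff n (rescale q Ds * qDeriv q F) =
      coeff n (rescale q (∑ k ∈ range (n + 1), C (g (k + 1) / qFact q k) * Fk' k) *
        qDeriv q F) := by
    refine coeff_mul_congr_left (fun m hm => ?_) _
    rw [coeff_rescale, coeff_rescale,
      coeff_eq_coeff_sum_range_of_X_pow_dvd (hP'.X_pow_dvd hq') hD (Nat.lt_succ_of_le hm)]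
  rw [hCs, hDs, hP.qDeriv_sum_range_succ hq' hP']

/-- Proposition 6.4: for the starred q-composition `G[F]*_q = ∑_k g_k F^{[k]*}/[k]!`
(`Cs = G[F]*_q` and `Ds = (D_q G)[q⁻¹F]*_q`, described coefficientwise, where
`Fk` are the starred q-powers of `F` and `Fk'` those of `q⁻¹F`),
one has `D_q(G[F]*_q)(t) = ((D_q G)[q⁻¹F]*_q)(qt) ⬝ D_q F(t)`. -/
theorem stmt15 {K : Type*} [Field K] (q : K) (hq0 : q ≠ 0)
    (hq : ∀ m : ℕ, 1 ≤ m → qInt q m ≠ 0)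
    (F : PowerSeries K) (hF0 : PowerSeries.constantCoeff F = 0)
    (Fk : ℕ → PowerSeries K) (hFk0 : Fk 0 = 1)
    (hFkc : ∀ k, 0 < k → PowerSeries.constantCoeff (Fk k) = 0)
    (hFkrec : ∀ k, 0 < k → qDeriv q (Fk k) =
      PowerSeries.C (qInt q k * (q ^ (k - 1))⁻¹) *
        PowerSeries.rescale q (Fk (k - 1)) * qDeriv q F)
    (Fk' : ℕ → PowerSeries K) (hFk'0 : Fk' 0 = 1)
    (hFk'c : ∀ k, 0 < k → PowerSeries.constantCoeff (Fk' k) = 0)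
    (hFk'rec : ∀ k, 0 < k → qDeriv q (Fk' k) =
      PowerSeries.C (qInt q k * (q ^ (k - 1))⁻¹) *
        PowerSeries.rescale q (Fk' (k - 1)) *
          qDeriv q (PowerSeries.C q⁻¹ * F))
    (g : ℕ → K) (Cs Ds : PowerSeries K)
    (hC : ∀ n, PowerSeries.coeff n Cs =
      ∑ k ∈ Finset.range (n + 1), g k / qFact q k * PowerSeries.coeff n (Fk k))
    (hD : ∀ n, PowerSeries.coeff n Ds =
      ∑ k ∈ Finset.range (n + 1), g (k + 1) / qFact q k * PowerSeries.coeff n (Fk' k)) :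
    qDeriv q Cs = PowerSeries.rescale q Ds * qDeriv q F :=
  stmt15_general q hq F Fk hFk0 hFkc hFkrec Fk' hFk'0 hFk'c hFk'rec g Cs Ds hC hD
end
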